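/- Let G be a graph on vertex set {1,…,N}, k ≥ 2, p_v = (v,v²), Q = conv{p_v}, Y = Q^k, and for each pair i < j and each forbidden pair (u,v) (meaning u = v or {u,v} ∉ E(G)) let F_{i,j,u,v} ⊆ Y be the face of Y obtained by fixing block i to p_u and block j to p_v. Let X = conv(⋃ F_{i,j,u,v}). Then X = Y if and only if G has no k-clique (counting tuples: a tuple (v_1,…,v_k) is a clique iff no pair (v_i,v_j) with i<j is forbidden). -/

import Mathlib

open scoped RealInnerProductSpace

noncomputable section

abbrev E2 := EuclideanSpace ℝ (Fin 2)

def momentPt (v : ℤ) : E2 := (WithLp.equiv 2 (Fin 2 → ℝ)).symm ![(v : ℝ), (v : ℝ) ^ 2]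

/-! The points `p_v` lie on the parabola `y = x²`, so the tangent functional
`x ↦ 2a x₀ - x₁` at abscissa `a` is at most `a²` on `Q` and attains `a²` among the `p_v` only
at `p_a`. For a clique tuple `t`, summing these functionals over the blocks exposes the vertex
`(p_{t_1}, …, p_{t_k})` of `Y`: a point of a forbidden face `F_{i,j,u,v}` has block `i` or
block `j` at a vertex of `Q` other than the one of `t`, so the sum is strictly smaller there, and
hence on all of `X`. Without a clique every vertex of `Y` lies in some forbidden face, and `Y` is
the convex hull of its vertices. -/

theorem PiLp.setOf_forall_mem_convexHull {𝕜 ι E : Type*} [Field 𝕜] [LinearOrder 𝕜]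
    [IsStrictOrderedRing 𝕜] [Finite ι] [AddCommGroup E] [Module 𝕜 E] (q : ENNReal) (P : Set E) :
    {z : PiLp q (fun _ : ι => E) | ∀ r, z r ∈ convexHull 𝕜 P} =
      convexHull 𝕜 {z | ∀ r, z r ∈ P} := by
  have h (S : Set E) : {z : PiLp q (fun _ : ι => E) | ∀ r, z r ∈ S} =
      (WithLp.linearEquiv q 𝕜 (ι → E)).symm '' Set.univ.pi fun _ => S := by
    ext z
    exact ⟨fun hz => ⟨z.ofLp, fun r _ => hz r, rfl⟩, by rintro ⟨x, hx, rfl⟩ r; exact hx r trivial⟩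
  rw [h, h, ← convexHull_pi]
  exact (WithLp.linearEquiv q 𝕜 (ι → E)).symm.toLinearMap.image_convexHull _

def parabolaTangent (a : ℝ) : E2 →L[ℝ] ℝ :=
  (2 * a) • EuclideanSpace.proj 0 - EuclideanSpace.proj 1

theorem parabolaTangent_momentPt (a : ℝ) (b : ℤ) :
    parabolaTangent a (momentPt b) = a ^ 2 - (a - b) ^ 2 := by
  simp [parabolaTangent, momentPt]
  ring

theorem parabolaTangent_le {a : ℝ} {x : E2} (hx : x ∈ convexHull ℝ (Set.range momentPt)) :
    parabolaTangent a x ≤ a ^ 2 := by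
  refine convexHull_min ?_ ((convex_Iic _).linear_preimage (parabolaTangent a).toLinearMap) hx
  rintro _ ⟨b, rfl⟩
  exact (parabolaTangent_momentPt a b).trans_le (sub_le_self _ (sq_nonneg _))

theorem parabolaTangent_momentPt_lt {a : ℝ} {b : ℤ} (hab : a ≠ b) :
    parabolaTangent a (momentPt b) < a ^ 2 :=
  (parabolaTangent_momentPt a b).trans_lt (sub_lt_self _ (sq_pos_of_ne_zero (sub_ne_zero.2 hab)))

section Product

variable {ι : Type*} [Fintype ι]

def parabolaTangentSum (a : ι → ℝ) : PiLp 2 (fun _ : ι => E2) →L[ℝ] ℝ :=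
  ∑ r, (parabolaTangent (a r)).comp (PiLp.proj 2 (fun _ => E2) r)

theorem parabolaTangentSum_apply (a : ι → ℝ) (w : PiLp 2 fun _ : ι => E2) :
    parabolaTangentSum a w = ∑ r, parabolaTangent (a r) (w r) := by
  simp [parabolaTangentSum]

theorem parabolaTangentSum_toLp_momentPt (c : ι → ℤ) :
    parabolaTangentSum (fun r => (c r : ℝ)) (WithLp.toLp 2 fun r => momentPt (c r)) =
      ∑ r, (c r : ℝ) ^ 2 := by
  simp [parabolaTangentSum_apply, parabolaTangent_momentPt]

theorem parabolaTangentSum_lt {a : ι → ℝ} {w : PiLp 2 fun _ : ι => E2}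
    (hw : ∀ r, w r ∈ convexHull ℝ (Set.range momentPt)) {r₀ : ι} {b : ℤ}
    (hb : w r₀ = momentPt b) (hne : a r₀ ≠ b) :
    parabolaTangentSum a w < ∑ r, a r ^ 2 := by
  rw [parabolaTangentSum_apply]
  refine Finset.sum_lt_sum (fun r _ => parabolaTangent_le (hw r)) ⟨r₀, Finset.mem_univ _, ?_⟩
  rw [hb]
  exact parabolaTangent_momentPt_lt hne

theorem toLp_momentPt_notMem_convexHull (c : ι → ℤ) {S : Set (PiLp 2 fun _ : ι => E2)}
    (hS : ∀ w ∈ S, (∀ r, w r ∈ convexHull ℝ (Set.range momentPt)) ∧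
      ∃ r, ∃ b ≠ c r, w r = momentPt b) :
    (WithLp.toLp 2 fun r => momentPt (c r)) ∉ convexHull ℝ S := by
  intro hc
  have hlt : S ⊆ parabolaTangentSum (fun r => (c r : ℝ)) ⁻¹' Set.Iio (∑ r, (c r : ℝ) ^ 2) := by
    intro w hw
    obtain ⟨hwQ, r, b, hb, hwr⟩ := hS w hw
    exact parabolaTangentSum_lt hwQ hwr (by exact_mod_cast hb.symm)
  have := convexHull_min hlt ((convex_Iio _).linear_preimage (parabolaTangentSum _).toLinearMap) hc
  simp [parabolaTangentSum_toLp_momentPt] at this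

end Product

theorem clique_polytope_gadget_general (N k : ℕ)
    (G : SimpleGraph (Fin N))
    (p : Fin N → E2) (hp : ∀ v : Fin N, p v = momentPt ((v : ℕ) + 1))
    (Q : Set E2) (hQ : Q = convexHull ℝ (Set.range p))
    (Y : Set (PiLp 2 fun _ : Fin k => E2))
    (hY : Y = {z | ∀ r, z r ∈ Q})
    (F : Fin k → Fin k → Fin N → Fin N → Set (PiLp 2 fun _ : Fin k => E2))
    (hF : ∀ i j u v, F i j u v = {z | z i = p u ∧ z j = p v ∧ ∀ r, z r ∈ Q})
    (X : Set (PiLp 2 fun _ : Fin k => E2))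
    (hX : X = convexHull ℝ
      (⋃ (i : Fin k) (j : Fin k) (_ : i < j) (u : Fin N) (v : Fin N)
        (_ : u = v ∨ ¬ G.Adj u v), F i j u v)) :
    X = Y ↔ ¬ ∃ t : Fin k → Fin N, ∀ i j : Fin k, i < j → G.Adj (t i) (t j) := by
  have hQ_sub : Q ⊆ convexHull ℝ (Set.range momentPt) := by
    rw [hQ]
    exact convexHull_mono (Set.range_subset_iff.2 fun v => ⟨_, (hp v).symm⟩)
  subst hX hY
  have hY_hull : {z : PiLp 2 fun _ : Fin k => E2 | ∀ r, z r ∈ Q} =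
      convexHull ℝ {z | ∀ r, z r ∈ Set.range p} := by
    rw [hQ, PiLp.setOf_forall_mem_convexHull]
  constructor
  · rintro hXY ⟨t, ht⟩
    have hvert : (WithLp.toLp 2 fun r => p (t r)) ∈ {z | ∀ r, z r ∈ Q} :=
      fun r => hQ ▸ subset_convexHull ℝ _ ⟨t r, rfl⟩
    simp only [hp, ← hXY] at hvert
    refine toLp_momentPt_notMem_convexHull (fun r => (t r : ℕ) + 1) ?_ hvert
    simp only [Set.mem_iUnion, hF]
    rintro w ⟨i, j, hij, u, v, huv, hwi, hwj, hwQ⟩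
    refine ⟨fun r => hQ_sub (hwQ r), ?_⟩
    have hmiss : u ≠ t i ∨ v ≠ t j := by
      contrapose! huv
      obtain ⟨rfl, rfl⟩ := huv
      exact ⟨(ht i j hij).ne, ht i j hij⟩
    rcases hmiss with h | h
    · exact ⟨i, _, by simpa [Fin.val_inj] using h, hwi.trans (hp u)⟩
    · exact ⟨j, _, by simpa [Fin.val_inj] using h, hwj.trans (hp v)⟩
  · intro hnc
    refine (convexHull_min ?_ (hY_hull ▸ convex_convexHull ℝ _)).antisymm ?_
    · simp only [Set.iUnion_subset_iff, hF]
      exact fun i j _ u v _ z hz => hz.2.2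
    · rw [hY_hull]
      refine convexHull_mono fun z hz => ?_
      choose t ht using hz
      obtain ⟨i, j, hij, hnadj⟩ : ∃ i j, i < j ∧ ¬G.Adj (t i) (t j) := by
        simpa using not_exists.1 hnc t
      simp only [Set.mem_iUnion, hF]
      exact ⟨i, j, hij, t i, t j, .inr hnadj, (ht i).symm, (ht j).symm,
        fun r => hQ ▸ subset_convexHull ℝ _ ⟨t r, ht r⟩⟩

/-- The clique polytope gadget: with `Y = Q^k` and `X` the convex hull of the union of
the forbidden-pair faces, `X = Y` iff the graph has no `k`-clique tuple. -/
theorem clique_polytope_gadget (N k : ℕ) (hk : 2 ≤ k)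
    (G : SimpleGraph (Fin N))
    (p : Fin N → E2) (hp : ∀ v : Fin N, p v = momentPt ((v : ℕ) + 1))
    (Q : Set E2) (hQ : Q = convexHull ℝ (Set.range p))
    (Y : Set (PiLp 2 fun _ : Fin k => E2))
    (hY : Y = {z | ∀ r, z r ∈ Q})
    (F : Fin k → Fin k → Fin N → Fin N → Set (PiLp 2 fun _ : Fin k => E2))
    (hF : ∀ i j u v, F i j u v = {z | z i = p u ∧ z j = p v ∧ ∀ r, z r ∈ Q})
    (X : Set (PiLp 2 fun _ : Fin k => E2))
    (hX : X = convexHull ℝ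
      (⋃ (i : Fin k) (j : Fin k) (_ : i < j) (u : Fin N) (v : Fin N)
        (_ : u = v ∨ ¬ G.Adj u v), F i j u v)) :
    X = Y ↔ ¬ ∃ t : Fin k → Fin N, ∀ i j : Fin k, i < j → G.Adj (t i) (t j) :=
  clique_polytope_gadget_general N k G p hp Q hQ Y hY F hF X hX
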